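/- arXiv:1508.00814 — 6 statements merged into one kernel-verified Lean document; each statement's English description precedes it below -/
import Mathlib

section
/- Let D = (E, 𝓕) be a delta-matroid and e ∈ E an element that is not a ribbon loop (i.e., e belongs to some minimum-cardinality feasible set). Then e belongs to some maximum-cardinality feasible set of D. -/
/-- `F` is the collection of feasible sets of a delta-matroid on ground set `E`. -/
def IsDeltaMatroid {α : Type*} [DecidableEq α] (E : Finset α) (F : Finset (Finset α)) : Prop :=
  F.Nonempty ∧ (∀ X ∈ F, X ⊆ E) ∧
    ∀ X ∈ F, ∀ Y ∈ F, ∀ u ∈ symmDiff X Y, ∃ v ∈ symmDiff X Y, symmDiff X {u, v} ∈ F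

/-- maximum cardinality of a feasible set -/
def rmaxF {α : Type*} [DecidableEq α] (F : Finset (Finset α)) : ℕ := F.sup Finset.card

/-- minimum cardinality of a feasible set -/
noncomputable def rminF {α : Type*} [DecidableEq α] (F : Finset (Finset α)) : ℕ :=
  sInf {n | ∃ X ∈ F, X.card = n}

/-- If `e` is not a ribbon loop (it lies in some minimum-cardinality feasible set),
then `e` lies in some maximum-cardinality feasible set. -/
theorem mem_max_of_mem_min {α : Type*} [DecidableEq α] (E : Finset α)
    (F : Finset (Finset α)) (hD : IsDeltaMatroid E F) (e : α)
    (hmin : ∃ X ∈ F, e ∈ X ∧ X.card = rminF F) :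
    ∃ Y ∈ F, e ∈ Y ∧ Y.card = rmaxF F := by
  obtain ⟨X, hX, heX, -⟩ := hmin
  obtain ⟨hne, -, hex⟩ := hD
  obtain ⟨Y, hY, hYcard⟩ := Finset.exists_mem_eq_sup F hne Finset.card
  have hYmax : Y.card = rmaxF F := hYcard.symm
  by_cases heY : e ∈ Y
  · exact ⟨Y, hY, heY, hYmax⟩
  have he : e ∈ symmDiff Y X := by simp [Finset.mem_symmDiff, heX, heY]
  obtain ⟨v, hv, hZ⟩ := hex Y hY X hX e he
  rw [Finset.mem_symmDiff] at hv
  rcases hv with ⟨hvY, hvX⟩ | ⟨hvX, hvY⟩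
  · -- v ∈ Y \ X : success
    have hve : v ≠ e := fun h => heY (h ▸ hvY)
    have hZeq : symmDiff Y {e, v} = insert e (Y.erase v) := by
      ext a
      by_cases h1 : a ∈ Y <;> by_cases h2 : a = e <;> by_cases h3 : a = v <;>
        simp_all [Finset.mem_symmDiff]
    refine ⟨symmDiff Y {e, v}, hZ, ?_, ?_⟩
    · rw [hZeq]; exact Finset.mem_insert_self _ _
    · rw [hZeq, Finset.card_insert_of_notMem (fun h => heY (Finset.mem_of_mem_erase h)),
        Finset.card_erase_of_mem hvY, ← hYmax]
      have : 0 < Y.card := Finset.card_pos.mpr ⟨v, hvY⟩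
      omega
  · -- v ∈ X \ Y : contradiction
    exfalso
    have hle : (symmDiff Y {e, v}).card ≤ Y.card := by
      rw [hYmax]; exact Finset.le_sup (f := Finset.card) hZ
    by_cases hve : v = e
    · subst hve
      have hZeq : symmDiff Y {v, v} = insert v Y := by
        ext a
        by_cases h1 : a ∈ Y <;> by_cases h3 : a = v <;> simp_all [Finset.mem_symmDiff]
      rw [hZeq, Finset.card_insert_of_notMem hvY] at hle
      omega
    · have hZeq : symmDiff Y {e, v} = insert e (insert v Y) := by
        ext a
        by_cases h1 : a ∈ Y <;> by_cases h2 : a = e <;> by_cases h3 : a = v <;>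
          simp_all [Finset.mem_symmDiff]
      rw [hZeq, Finset.card_insert_of_notMem (by simp [heY, Ne.symm hve]),
        Finset.card_insert_of_notMem hvY] at hle
      omega
end

section
/- Let D = (E, 𝓕) be a delta-matroid and e ∈ E. Define 2ρ(D) := r_max(D) + r_min(D). Then: (i) if e is not a ribbon loop, 2ρ(D) = 2ρ(D/e) + 2; (ii) if e is an orientable ribbon loop, 2ρ(D) = 2ρ(D/e); (iii) if e is a non-orientable ribbon loop, 2ρ(D) = 2ρ(D/e) + 1. -/
/-- feasible sets of the contraction `D/e` -/
def contractFeas {α : Type*} [DecidableEq α] (e : α) (F : Finset (Finset α)) :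
    Finset (Finset α) :=
  if ∀ X ∈ F, e ∉ X then F.filter (fun X => e ∉ X)
  else (F.filter (fun X => e ∈ X)).image (fun X => X.erase e)

/-- `e` is a ribbon loop: it lies in no minimum-cardinality feasible set. -/
def RibbonLoop {α : Type*} [DecidableEq α] (F : Finset (Finset α)) (e : α) : Prop :=
  ∀ X ∈ F, X.card = rminF F → e ∉ X

section Aux

variable {α : Type*} [DecidableEq α]

lemma rminF_le {F : Finset (Finset α)} {X : Finset α} (hX : X ∈ F) : rminF F ≤ X.card :=
  Nat.sInf_le ⟨X, hX, rfl⟩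

lemma rminF_mem {F : Finset (Finset α)} (h : F.Nonempty) : ∃ X ∈ F, X.card = rminF F := by
  obtain ⟨X, hX⟩ := h
  have hne : {n | ∃ X ∈ F, X.card = n}.Nonempty := ⟨X.card, X, hX, rfl⟩
  obtain ⟨Y, hY, h'⟩ := Nat.sInf_mem hne
  exact ⟨Y, hY, h'⟩

lemma le_rmaxF {F : Finset (Finset α)} {X : Finset α} (hX : X ∈ F) : X.card ≤ rmaxF F :=
  Finset.le_sup hX

lemma rmaxF_mem {F : Finset (Finset α)} (h : F.Nonempty) : ∃ X ∈ F, X.card = rmaxF F := by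
  obtain ⟨X, hX, h'⟩ := Finset.exists_mem_eq_sup F h Finset.card
  exact ⟨X, hX, h'.symm⟩

lemma symmDiff_pair_self {Y : Finset α} {e : α} (he : e ∉ Y) :
    symmDiff Y ({e, e} : Finset α) = insert e Y := by
  ext a
  simp only [Finset.mem_symmDiff, Finset.mem_insert, Finset.mem_singleton, or_self]
  constructor
  · rintro (⟨h1, h2⟩ | ⟨h1, h2⟩) <;> tauto
  · rintro (rfl | h)
    · exact Or.inr ⟨rfl, he⟩
    · exact Or.inl ⟨h, fun hae => he (hae ▸ h)⟩

lemma symmDiff_pair_mem {Y : Finset α} {e v : α} (he : e ∉ Y) (hv : v ∈ Y) :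
    symmDiff Y ({e, v} : Finset α) = insert e (Y.erase v) := by
  have hve : v ≠ e := fun h => he (h ▸ hv)
  ext a
  simp only [Finset.mem_symmDiff, Finset.mem_insert, Finset.mem_singleton, Finset.mem_erase]
  constructor
  · rintro (⟨h1, h2⟩ | ⟨h1, h2⟩)
    · exact Or.inr ⟨fun hav => h2 (Or.inr hav), h1⟩
    · rcases h1 with rfl | rfl
      · exact Or.inl rfl
      · exact absurd hv h2
  · rintro (rfl | ⟨h1, h2⟩)
    · exact Or.inr ⟨Or.inl rfl, he⟩
    · exact Or.inl ⟨h2, by rintro (rfl | rfl) <;> [exact he h2; exact h1 rfl]⟩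

lemma symmDiff_pair_notMem {Y : Finset α} {e v : α} (he : e ∉ Y) (hv : v ∉ Y) :
    symmDiff Y ({e, v} : Finset α) = insert v (insert e Y) := by
  ext a
  simp only [Finset.mem_symmDiff, Finset.mem_insert, Finset.mem_singleton]
  constructor
  · rintro (⟨h1, h2⟩ | ⟨h1, h2⟩) <;> tauto
  · rintro (rfl | rfl | h)
    · exact Or.inr ⟨Or.inr rfl, hv⟩
    · exact Or.inr ⟨Or.inl rfl, he⟩
    · exact Or.inl ⟨h, by rintro (rfl | rfl) <;> [exact he h; exact hv h]⟩

lemma exchange_cases {E : Finset α} {F : Finset (Finset α)} (hD : IsDeltaMatroid E F)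
    {X Y : Finset α} (hX : X ∈ F) (hY : Y ∈ F) {e : α} (heX : e ∈ X) (heY : e ∉ Y) :
    insert e Y ∈ F ∨ (∃ v ∈ Y, insert e (Y.erase v) ∈ F) ∨
      (∃ v ∉ Y, v ≠ e ∧ insert v (insert e Y) ∈ F) := by
  obtain ⟨-, -, hexch⟩ := hD
  have heYX : e ∈ symmDiff Y X := by
    simp [Finset.mem_symmDiff, heX, heY]
  obtain ⟨v, hv, hfeas⟩ := hexch Y hY X hX e heYX
  rw [Finset.mem_symmDiff] at hv
  by_cases hve : v = e
  · subst hve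
    rw [symmDiff_pair_self heY] at hfeas
    exact Or.inl hfeas
  · rcases hv with ⟨hvY, -⟩ | ⟨-, hvY⟩
    · rw [symmDiff_pair_mem heY hvY] at hfeas
      exact Or.inr (Or.inl ⟨v, hvY, hfeas⟩)
    · rw [symmDiff_pair_notMem heY hvY] at hfeas
      exact Or.inr (Or.inr ⟨v, hvY, hve, hfeas⟩)

/-- If some feasible set contains `e`, some maximum-cardinality feasible set contains `e`. -/
lemma exists_max_with_e {E : Finset α} {F : Finset (Finset α)} (hD : IsDeltaMatroid E F)
    {e : α} (hex : ∃ X ∈ F, e ∈ X) : ∃ Y ∈ F, e ∈ Y ∧ Y.card = rmaxF F := by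
  obtain ⟨X, hX, heX⟩ := hex
  obtain ⟨Y, hY, hYc⟩ := rmaxF_mem ⟨X, hX⟩
  by_cases heY : e ∈ Y
  · exact ⟨Y, hY, heY, hYc⟩
  rcases exchange_cases hD hX hY heX heY with h | ⟨v, hvY, h⟩ | ⟨v, hvY, hve, h⟩
  · exfalso
    have h1 := le_rmaxF h
    rw [Finset.card_insert_of_notMem heY] at h1
    omega
  · refine ⟨_, h, Finset.mem_insert_self _ _, ?_⟩
    have hcp : 0 < Y.card := Finset.card_pos.mpr ⟨v, hvY⟩
    have h1 := le_rmaxF h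
    rw [Finset.card_insert_of_notMem (fun hc => heY (Finset.mem_of_mem_erase hc)),
      Finset.card_erase_of_mem hvY]
    omega
  · exfalso
    have h1 := le_rmaxF h
    rw [Finset.card_insert_of_notMem (by simp [hve, hvY]),
      Finset.card_insert_of_notMem heY] at h1
    omega

/-- If `e` is an orientable ribbon loop lying in some feasible set, then some feasible
set of cardinality `rminF F + 2` contains `e`. -/
lemma exists_min2_with_e {E : Finset α} {F : Finset (Finset α)} (hD : IsDeltaMatroid E F)
    {e : α} (hex : ∃ X ∈ F, e ∈ X) (hrl : RibbonLoop F e)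
    (hor : ¬ (∃ X ∈ F, e ∈ X ∧ X.card = rminF F + 1)) :
    ∃ Y ∈ F, e ∈ Y ∧ Y.card = rminF F + 2 := by
  obtain ⟨X, hX, heX⟩ := hex
  obtain ⟨Y, hY, hYc⟩ := rminF_mem (⟨X, hX⟩ : F.Nonempty)
  have heY : e ∉ Y := hrl Y hY hYc
  rcases exchange_cases hD hX hY heX heY with h | ⟨v, hvY, h⟩ | ⟨v, hvY, hve, h⟩
  · exfalso
    refine hor ⟨insert e Y, h, Finset.mem_insert_self _ _, ?_⟩
    rw [Finset.card_insert_of_notMem heY, hYc]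
  · exfalso
    have hcp : 0 < Y.card := Finset.card_pos.mpr ⟨v, hvY⟩
    have hcard : (insert e (Y.erase v)).card = rminF F := by
      rw [Finset.card_insert_of_notMem (fun hc => heY (Finset.mem_of_mem_erase hc)),
        Finset.card_erase_of_mem hvY]
      omega
    exact hrl _ h hcard (Finset.mem_insert_self _ _)
  · refine ⟨_, h, Finset.mem_insert_of_mem (Finset.mem_insert_self _ _), ?_⟩
    rw [Finset.card_insert_of_notMem (by simp [hve, hvY]),
      Finset.card_insert_of_notMem heY, hYc]

lemma mem_contractFeas {F : Finset (Finset α)} {e : α} (hex : ∃ X ∈ F, e ∈ X)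
    {X : Finset α} :
    X ∈ contractFeas e F ↔ ∃ Z ∈ F, e ∈ Z ∧ Z.erase e = X := by
  have hif : ¬ ∀ X ∈ F, e ∉ X := by
    obtain ⟨Z, hZ, heZ⟩ := hex
    exact fun h => h Z hZ heZ
  rw [contractFeas, if_neg hif]
  simp [Finset.mem_image, Finset.mem_filter]
  tauto

lemma rmax_contract {E : Finset α} {F : Finset (Finset α)} (hD : IsDeltaMatroid E F)
    {e : α} (hex : ∃ X ∈ F, e ∈ X) : rmaxF (contractFeas e F) = rmaxF F - 1 := by
  apply le_antisymm
  · apply Finset.sup_le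
    intro X hX
    obtain ⟨Z, hZ, heZ, rfl⟩ := (mem_contractFeas hex).mp hX
    rw [Finset.card_erase_of_mem heZ]
    exact Nat.sub_le_sub_right (le_rmaxF hZ) 1
  · obtain ⟨Y, hY, heY, hYc⟩ := exists_max_with_e hD hex
    have : Y.erase e ∈ contractFeas e F := (mem_contractFeas hex).mpr ⟨Y, hY, heY, rfl⟩
    have h1 := Finset.le_sup (f := Finset.card) this
    rwa [Finset.card_erase_of_mem heY, hYc] at h1

lemma rmin_contract {F : Finset (Finset α)} {e : α} (hex : ∃ X ∈ F, e ∈ X) {k : ℕ}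
    (hub : ∃ X ∈ F, e ∈ X ∧ X.card = k)
    (hlb : ∀ X ∈ F, e ∈ X → k ≤ X.card) :
    rminF (contractFeas e F) = k - 1 := by
  apply le_antisymm
  · obtain ⟨X, hX, heX, hXc⟩ := hub
    refine Nat.sInf_le ⟨X.erase e, (mem_contractFeas hex).mpr ⟨X, hX, heX, rfl⟩, ?_⟩
    rw [Finset.card_erase_of_mem heX, hXc]
  · apply le_csInf
    · obtain ⟨X, hX, heX, hXc⟩ := hub
      exact ⟨(X.erase e).card, X.erase e, (mem_contractFeas hex).mpr ⟨X, hX, heX, rfl⟩, rfl⟩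
    · rintro n ⟨X, hX, rfl⟩
      obtain ⟨Z, hZ, heZ, rfl⟩ := (mem_contractFeas hex).mp hX
      rw [Finset.card_erase_of_mem heZ]
      exact Nat.sub_le_sub_right (hlb Z hZ heZ) 1

end Aux

/-- A ribbon loop `e` is non-orientable when it lies in some feasible set of
cardinality `r_min(D) + 1`, and orientable otherwise.  With `2ρ(D) = r_max(D) + r_min(D)`:
(i) if `e` is not a ribbon loop then `2ρ(D) = 2ρ(D/e) + 2`;
(ii) if `e` is an orientable ribbon loop then `2ρ(D) = 2ρ(D/e)`;
(iii) if `e` is a non-orientable ribbon loop then `2ρ(D) = 2ρ(D/e) + 1`. -/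
theorem two_rho_contract {α : Type*} [DecidableEq α] (E : Finset α)
    (F : Finset (Finset α)) (hD : IsDeltaMatroid E F) (e : α) (he : e ∈ E) :
    (¬ RibbonLoop F e →
      rmaxF F + rminF F = (rmaxF (contractFeas e F) + rminF (contractFeas e F)) + 2) ∧
    (RibbonLoop F e → ¬ (∃ X ∈ F, e ∈ X ∧ X.card = rminF F + 1) →
      rmaxF F + rminF F = rmaxF (contractFeas e F) + rminF (contractFeas e F)) ∧
    (RibbonLoop F e → (∃ X ∈ F, e ∈ X ∧ X.card = rminF F + 1) →
      rmaxF F + rminF F = (rmaxF (contractFeas e F) + rminF (contractFeas e F)) + 1) := by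
  by_cases hall : ∀ X ∈ F, e ∉ X
  · have hrl : RibbonLoop F e := fun X hX _ => hall X hX
    have hcon : contractFeas e F = F := by
      rw [contractFeas, if_pos hall]
      exact Finset.filter_true_of_mem hall
    refine ⟨fun h => absurd hrl h, fun _ _ => by rw [hcon], fun _ h => ?_⟩
    obtain ⟨X, hX, heX, -⟩ := h
    exact absurd heX (hall X hX)
  · push_neg at hall
    obtain ⟨X0, hX0, heX0⟩ := hall
    have hex : ∃ X ∈ F, e ∈ X := ⟨X0, hX0, heX0⟩
    have hmax := rmax_contract hD hex
    obtain ⟨Ymax, hYmax, heYmax, hYmaxc⟩ := exists_max_with_e hD hex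
    have hminle : rminF F ≤ rmaxF F := (rminF_le hYmax).trans_eq hYmaxc
    refine ⟨fun hnrl => ?_, fun hrl hor => ?_, fun hrl hnor => ?_⟩
    · -- not a ribbon loop: a minimum feasible set contains e
      rw [RibbonLoop] at hnrl
      push_neg at hnrl
      obtain ⟨X, hX, hXc, heX⟩ := hnrl
      have hmin : rminF (contractFeas e F) = rminF F - 1 :=
        rmin_contract hex ⟨X, hX, heX, hXc⟩ (fun Z hZ _ => rminF_le hZ)
      have h1 : 1 ≤ rminF F := hXc ▸ Finset.card_pos.mpr ⟨e, heX⟩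
      omega
    · -- orientable ribbon loop
      obtain ⟨Y, hY, heY, hYc⟩ := exists_min2_with_e hD hex hrl hor
      have hlb : ∀ Z ∈ F, e ∈ Z → rminF F + 2 ≤ Z.card := by
        intro Z hZ heZ
        have h1 := rminF_le hZ
        have h2 : Z.card ≠ rminF F := fun h => hrl Z hZ h heZ
        have h3 : Z.card ≠ rminF F + 1 := fun h => hor ⟨Z, hZ, heZ, h⟩
        omega
      have hmin : rminF (contractFeas e F) = rminF F + 2 - 1 :=
        rmin_contract hex ⟨Y, hY, heY, hYc⟩ hlb
      have h2 : rminF F + 2 ≤ rmaxF F := hYmaxc ▸ hlb Ymax hYmax heYmax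
      omega
    · -- non-orientable ribbon loop
      obtain ⟨X, hX, heX, hXc⟩ := hnor
      have hlb : ∀ Z ∈ F, e ∈ Z → rminF F + 1 ≤ Z.card := by
        intro Z hZ heZ
        have h1 := rminF_le hZ
        have h2 : Z.card ≠ rminF F := fun h => hrl Z hZ h heZ
        omega
      have hmin : rminF (contractFeas e F) = rminF F + 1 - 1 :=
        rmin_contract hex ⟨X, hX, heX, hXc⟩ hlb
      have h2 : rminF F + 1 ≤ rmaxF F := hYmaxc ▸ hlb Ymax hYmax heYmax
      omega
end

section
/- Let D = (E, 𝓕) be a delta-matroid and suppose e ∈ E is an orientable ribbon loop that is not a loop. Then e lies in no feasible set of cardinality r_min(D) or r_min(D) + 1, but e lies in some feasible set of cardinality r_min(D) + 2. -/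
/-- Suppose `e` is an orientable ribbon loop that is not a loop: `e` lies in some
feasible set, lies in no minimum-cardinality feasible set, and lies in no feasible
set of cardinality `r_min(D) + 1`.  Then `e` lies in no feasible set of cardinality
`r_min(D)` or `r_min(D) + 1`, but lies in some feasible set of cardinality `r_min(D) + 2`. -/
theorem orientable_ribbonLoop_card {α : Type*} [DecidableEq α] (E : Finset α)
    (F : Finset (Finset α)) (hD : IsDeltaMatroid E F) (e : α) (he : e ∈ E)
    (hnotloop : ∃ X ∈ F, e ∈ X)
    (hribbon : ∀ X ∈ F, X.card = rminF F → e ∉ X)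
    (horient : ∀ X ∈ F, X.card = rminF F + 1 → e ∉ X) :
    (∀ X ∈ F, X.card = rminF F → e ∉ X) ∧
    (∀ X ∈ F, X.card = rminF F + 1 → e ∉ X) ∧
    (∃ X ∈ F, e ∈ X ∧ X.card = rminF F + 2) := by
  refine ⟨hribbon, horient, ?_⟩
  obtain ⟨hne, hsub, hex⟩ := hD
  obtain ⟨X0, hX0⟩ := hne
  have hmem : rminF F ∈ {n | ∃ X ∈ F, X.card = n} :=
    Nat.sInf_mem ⟨X0.card, X0, hX0, rfl⟩
  obtain ⟨X, hX, hXcard⟩ := hmem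
  obtain ⟨Y, hY, heY⟩ := hnotloop
  have heX : e ∉ X := hribbon X hX hXcard
  have heSD : e ∈ symmDiff X Y := by
    rw [Finset.mem_symmDiff]; exact Or.inr ⟨heY, heX⟩
  obtain ⟨v, hv, hfeas⟩ := hex X hX Y hY e heSD
  set Z := symmDiff X ({e, v} : Finset α) with hZ
  have heZ : e ∈ Z := by
    rw [hZ, Finset.mem_symmDiff]
    exact Or.inr ⟨by simp, heX⟩
  by_cases hve : v = e
  · have hZeq : Z = insert e X := by
      ext x
      simp only [hZ, Finset.mem_symmDiff, Finset.mem_insert, Finset.mem_singleton, hve]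
      constructor
      · rintro (⟨hx, h⟩ | ⟨h, hx⟩) <;> tauto
      · rintro (rfl | hx)
        · exact Or.inr ⟨by tauto, heX⟩
        · by_cases hxe : x = e
          · subst hxe; exact absurd hx heX
          · exact Or.inl ⟨hx, by tauto⟩
    have : Z.card = rminF F + 1 := by
      rw [hZeq, Finset.card_insert_of_notMem heX, hXcard]
    exact absurd heZ (horient Z hfeas this)
  · by_cases hvX : v ∈ X
    · have hZeq : Z = insert e (X.erase v) := by
        ext x
        simp only [hZ, Finset.mem_symmDiff, Finset.mem_insert, Finset.mem_singleton,
          Finset.mem_erase]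
        constructor
        · rintro (⟨hx, h⟩ | ⟨h, hx⟩)
          · push_neg at h; exact Or.inr ⟨h.2, hx⟩
          · rcases h with rfl | rfl
            · exact Or.inl rfl
            · exact absurd hvX hx
        · rintro (rfl | ⟨hxv, hx⟩)
          · exact Or.inr ⟨Or.inl rfl, heX⟩
          · refine Or.inl ⟨hx, ?_⟩
            rintro (rfl | rfl)
            · exact heX hx
            · exact hxv rfl
      have : Z.card = rminF F := by
        rw [hZeq, Finset.card_insert_of_notMem (by simp [heX]),
          Finset.card_erase_of_mem hvX, hXcard]
        have : 1 ≤ X.card := Finset.card_pos.mpr ⟨v, hvX⟩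
        omega
      exact absurd heZ (hribbon Z hfeas this)
    · have hZeq : Z = insert e (insert v X) := by
        ext x
        simp only [hZ, Finset.mem_symmDiff, Finset.mem_insert, Finset.mem_singleton]
        constructor
        · rintro (⟨hx, h⟩ | ⟨h, hx⟩) <;> tauto
        · rintro (rfl | rfl | hx)
          · exact Or.inr ⟨Or.inl rfl, heX⟩
          · exact Or.inr ⟨Or.inr rfl, hvX⟩
          · by_cases hxe : x = e
            · subst hxe; exact absurd hx heX
            · by_cases hxv : x = v
              · subst hxv; exact absurd hx hvX
              · exact Or.inl ⟨hx, by tauto⟩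
      refine ⟨Z, hfeas, heZ, ?_⟩
      rw [hZeq, Finset.card_insert_of_notMem (by simp [heX, Ne.symm hve]),
        Finset.card_insert_of_notMem hvX, hXcard]
end

section
/- Let D = (E, 𝓕) be a delta-matroid, e ∈ E, and f ∈ E with f ≠ e and f not a coloop. Then e is a ribbon loop of D if and only if e is a ribbon loop of D \ f. -/
/-- For `f ≠ e` with `f` not a coloop, `e` is a ribbon loop of `D` if and only
if `e` is a ribbon loop of `D \ f`. -/
theorem ribbonLoop_delete_iff {α : Type*} [DecidableEq α] (E : Finset α)
    (F : Finset (Finset α)) (hD : IsDeltaMatroid E F) (e f : α)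
    (he : e ∈ E) (hf : f ∈ E) (hne : f ≠ e)
    (hnotcoloop : ∃ X ∈ F, f ∉ X) :
    RibbonLoop F e ↔ RibbonLoop (F.filter (fun X => f ∉ X)) e := by
  classical
  obtain ⟨hFne, hsub, hex⟩ := hD
  set m := rminF F with hm
  have hset : {n | ∃ X ∈ F, X.card = n}.Nonempty := by
    obtain ⟨X, hX⟩ := hFne; exact ⟨X.card, X, hX, rfl⟩
  have hmem : ∃ X ∈ F, X.card = m := Nat.sInf_mem hset
  have hle : ∀ Z ∈ F, m ≤ Z.card := fun Z hZ => Nat.sInf_le ⟨Z, hZ, rfl⟩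
  have key : ∀ X ∈ F, X.card = m → f ∈ X →
      ∃ X' ∈ F, X'.card = m ∧ f ∉ X' ∧ ∀ a ∈ X, a ≠ f → a ∈ X' := by
    intro X hX hXm hfX
    obtain ⟨Y, hY, hfY⟩ := hnotcoloop
    have hfs : f ∈ symmDiff X Y := by
      simp only [Finset.mem_symmDiff]; tauto
    obtain ⟨v, hv, hfeas⟩ := hex X hX Y hY f hfs
    by_cases hvf : v = f
    · have hEq : symmDiff X ({f, v} : Finset α) = X.erase f := by
        ext a; by_cases hav : a = f <;>
          simp [Finset.mem_symmDiff, hav, hfX, hvf]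
      rw [hEq] at hfeas
      have h1 := hle _ hfeas
      have h2 : (X.erase f).card = X.card - 1 := Finset.card_erase_of_mem hfX
      have h3 : 1 ≤ X.card := Finset.card_pos.2 ⟨f, hfX⟩
      omega
    · by_cases hvX : v ∈ X
      · have hEq : symmDiff X ({f, v} : Finset α) = (X.erase f).erase v := by
          ext a
          by_cases hav : a = v
          · simp [Finset.mem_symmDiff, hav, hvX]
          · by_cases haf : a = f <;>
              simp [Finset.mem_symmDiff, hav, haf, hfX, hvX]
        rw [hEq] at hfeas
        have h1 := hle _ hfeas
        have h2 : ((X.erase f).erase v).card = (X.erase f).card - 1 :=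
          Finset.card_erase_of_mem (Finset.mem_erase.2 ⟨hvf, hvX⟩)
        have h3 : (X.erase f).card = X.card - 1 := Finset.card_erase_of_mem hfX
        have h4 : 2 ≤ X.card := by
          have := Finset.one_lt_card.2 ⟨f, hfX, v, hvX, fun h => hvf h.symm⟩
          omega
        omega
      · have hfv : ¬ f = v := fun h => hvf h.symm
        have hEq : symmDiff X ({f, v} : Finset α) = insert v (X.erase f) := by
          ext a
          by_cases hav : a = v
          · simp [Finset.mem_symmDiff, hav, hvX]
          · by_cases haf : a = f <;>
              simp [Finset.mem_symmDiff, hav, haf, hfX, hvX, hfv]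
        rw [hEq] at hfeas
        refine ⟨_, hfeas, ?_, ?_, ?_⟩
        · have hvE : v ∉ X.erase f := fun h => hvX (Finset.mem_of_mem_erase h)
          rw [Finset.card_insert_of_notMem hvE, Finset.card_erase_of_mem hfX]
          have h3 : 1 ≤ X.card := Finset.card_pos.2 ⟨f, hfX⟩
          omega
        · simp only [Finset.mem_insert, Finset.mem_erase]
          rintro (h | ⟨h, _⟩)
          · exact hvf h.symm
          · exact h rfl
        · intro a ha haf
          exact Finset.mem_insert_of_mem (Finset.mem_erase.2 ⟨haf, ha⟩)
  -- a minimum feasible set avoiding f exists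
  obtain ⟨X₀, hX₀, hX₀m⟩ := hmem
  have hW : ∃ W ∈ F, W.card = m ∧ f ∉ W := by
    by_cases hfX₀ : f ∈ X₀
    · obtain ⟨X', h1, h2, h3, _⟩ := key X₀ hX₀ hX₀m hfX₀
      exact ⟨X', h1, h2, h3⟩
    · exact ⟨X₀, hX₀, hX₀m, hfX₀⟩
  obtain ⟨W, hWF, hWm, hWf⟩ := hW
  have hWF' : W ∈ F.filter (fun X => f ∉ X) := Finset.mem_filter.2 ⟨hWF, hWf⟩
  have hm' : rminF (F.filter (fun X => f ∉ X)) = m := by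
    have hset' : {n | ∃ X ∈ F.filter (fun X => f ∉ X), X.card = n}.Nonempty :=
      ⟨W.card, W, hWF', rfl⟩
    obtain ⟨Z, hZ, hZc⟩ := Nat.sInf_mem hset'
    have hle1 : rminF (F.filter (fun X => f ∉ X)) ≤ m := by
      rw [← hWm]; exact Nat.sInf_le ⟨W, hWF', rfl⟩
    have hre : rminF (F.filter (fun X => f ∉ X)) = Z.card := hZc.symm
    have hle2 : m ≤ rminF (F.filter (fun X => f ∉ X)) := by
      rw [hre]; exact hle Z (Finset.mem_filter.1 hZ).1
    omega
  constructor
  · intro h X hX hXc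
    rw [hm'] at hXc
    exact h X (Finset.mem_filter.1 hX).1 hXc
  · intro h X hX hXc
    by_cases hfX : f ∈ X
    · obtain ⟨X', h1, h2, h3, h4⟩ := key X hX hXc hfX
      have he' : e ∉ X' := h X' (Finset.mem_filter.2 ⟨h1, h3⟩) (by rw [hm']; exact h2)
      intro heX
      exact he' (h4 e heX (fun hef => hne hef.symm))
    · exact h X (Finset.mem_filter.2 ⟨hX, hfX⟩) (by rw [hm']; exact hXc)
end

section
/- Let D = (E, 𝓕) be a delta-matroid and e ∈ E. Then e is a loop of D + e (i.e., e lies in no set of the collection of D + e) if and only if e is a loop of D + E, where D + E denotes loop complementation applied successively at every element of E. -/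
/-- Loop complementation at `e`. -/
def loopComp {α : Type*} [DecidableEq α] (e : α) (F : Finset (Finset α)) :
    Finset (Finset α) :=
  symmDiff F ((F.filter (fun X => e ∉ X)).image (fun X => insert e X))

section LoopCompSet

variable {α : Type*} [DecidableEq α]

def loopCompSet (f : α) (S : Set (Finset α)) : Set (Finset α) :=
  symmDiff S {Y | f ∈ Y ∧ Y.erase f ∈ S}

theorem coe_loopComp (f : α) (H : Finset (Finset α)) :
    (↑(loopComp f H) : Set (Finset α)) = loopCompSet f ↑H := by
  rw [loopComp, loopCompSet, Finset.coe_symmDiff]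
  congr 1
  ext Y
  simp only [Finset.coe_image, Finset.coe_filter, Set.mem_image, Set.mem_ofPred_eq,
    Finset.mem_coe]
  constructor
  · rintro ⟨X, ⟨hX, hfX⟩, rfl⟩
    exact ⟨Finset.mem_insert_self _ _, by rwa [Finset.erase_insert hfX]⟩
  · rintro ⟨hfY, hY⟩
    exact ⟨Y.erase f, ⟨hY, Finset.notMem_erase _ _⟩, Finset.insert_erase hfY⟩

theorem loopCompSet_involutive (f : α) : Function.Involutive (loopCompSet f) := by
  intro S
  have hsnd : {Y : Finset α | f ∈ Y ∧ Y.erase f ∈ loopCompSet f S} =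
      {Y | f ∈ Y ∧ Y.erase f ∈ S} := by
    ext Y
    simp [loopCompSet, Set.mem_symmDiff]
  rw [loopCompSet, hsnd, loopCompSet, symmDiff_symmDiff_cancel_right]

theorem loopCompSet_empty (f : α) : loopCompSet f ∅ = ∅ := by
  simp [loopCompSet]

theorem preimage_loopCompSet {f : α} {φ : Finset α → Finset α} (hmem : ∀ Y, f ∈ φ Y ↔ f ∈ Y)
    (herase : ∀ Y, (φ Y).erase f = φ (Y.erase f)) (S : Set (Finset α)) :
    φ ⁻¹' loopCompSet f S = loopCompSet f (φ ⁻¹' S) := by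
  ext Y
  simp [loopCompSet, Set.mem_symmDiff, hmem, herase]

theorem preimage_insert_loopCompSet_self (e : α) (S : Set (Finset α)) :
    insert e ⁻¹' loopCompSet e S = symmDiff (insert e ⁻¹' S) ((Finset.erase · e) ⁻¹' S) := by
  ext Y
  simp [loopCompSet, Set.mem_symmDiff]

theorem foldr_loopCompSet_injective (l : List α) :
    Function.Injective fun S => l.foldr loopCompSet S := by
  induction l with
  | nil => exact Function.injective_id
  | cons f t ih => exact (loopCompSet_involutive f).injective.comp ih

theorem foldr_loopCompSet_eq_empty_iff (l : List α) {S : Set (Finset α)} :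
    l.foldr loopCompSet S = ∅ ↔ S = ∅ := by
  have hempty : l.foldr loopCompSet ∅ = ∅ := by
    induction l with
    | nil => rfl
    | cons f t ih => rw [List.foldr_cons, ih, loopCompSet_empty]
  exact (foldr_loopCompSet_injective l).eq_iff' hempty

theorem preimage_foldr_loopComp {l : List α} {φ : Finset α → Finset α}
    (hmem : ∀ f ∈ l, ∀ Y, f ∈ φ Y ↔ f ∈ Y)
    (herase : ∀ f ∈ l, ∀ Y, (φ Y).erase f = φ (Y.erase f)) (H : Finset (Finset α)) :
    φ ⁻¹' ↑(l.foldr loopComp H) = l.foldr loopCompSet (φ ⁻¹' ↑H) := by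
  induction l with
  | nil => rfl
  | cons f t ih =>
    rw [List.foldr_cons, List.foldr_cons, coe_loopComp,
      preimage_loopCompSet (hmem f List.mem_cons_self) (herase f List.mem_cons_self),
      ih (fun g hg => hmem g (List.mem_cons_of_mem f hg))
        (fun g hg => herase g (List.mem_cons_of_mem f hg))]

end LoopCompSet

section Sections

variable {α : Type*} [DecidableEq α] {e : α}

theorem preimage_insert_foldr_loopComp {l : List α} (he : e ∉ l) (H : Finset (Finset α)) :
    insert e ⁻¹' ↑(l.foldr loopComp H) = l.foldr loopCompSet (insert e ⁻¹' ↑H) := by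
  have hne : ∀ f ∈ l, f ≠ e := fun f hf hfe => he (hfe ▸ hf)
  refine preimage_foldr_loopComp (fun f hf Y => ?_) (fun f hf Y => ?_) H
  · simp [hne f hf]
  · exact Finset.erase_insert_of_ne (hne f hf).symm

theorem preimage_erase_foldr_loopComp {l : List α} (he : e ∉ l) (H : Finset (Finset α)) :
    (Finset.erase · e) ⁻¹' ↑(l.foldr loopComp H) =
      l.foldr loopCompSet ((Finset.erase · e) ⁻¹' ↑H) := by
  have hne : ∀ f ∈ l, f ≠ e := fun f hf hfe => he (hfe ▸ hf)
  refine preimage_foldr_loopComp (fun f hf Y => ?_) (fun f hf Y => ?_) H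
  · simp [hne f hf]
  · exact Finset.erase_right_comm

theorem forall_notMem_iff_preimage_insert_eq_empty (H : Finset (Finset α)) :
    (∀ X ∈ H, e ∉ X) ↔ insert e ⁻¹' (↑H : Set (Finset α)) = ∅ := by
  rw [Set.eq_empty_iff_forall_notMem]
  refine ⟨fun h Y hY => h _ hY (Finset.mem_insert_self e Y), fun h X hX heX => ?_⟩
  exact h X (by rwa [Set.mem_preimage, Finset.insert_eq_of_mem heX])

theorem forall_notMem_loopComp_self_iff (H : Finset (Finset α)) :
    (∀ X ∈ loopComp e H, e ∉ X) ↔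
      (Finset.erase · e) ⁻¹' (↑H : Set (Finset α)) = insert e ⁻¹' ↑H := by
  rw [forall_notMem_iff_preimage_insert_eq_empty, coe_loopComp,
    preimage_insert_loopCompSet_self, Set.symmDiff_eq_empty, eq_comm]

theorem forall_notMem_foldr_loopComp_iff {l : List α} (he : e ∉ l) (H : Finset (Finset α)) :
    (∀ X ∈ l.foldr loopComp H, e ∉ X) ↔ ∀ X ∈ H, e ∉ X := by
  rw [forall_notMem_iff_preimage_insert_eq_empty, forall_notMem_iff_preimage_insert_eq_empty,
    preimage_insert_foldr_loopComp he, foldr_loopCompSet_eq_empty_iff]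

theorem forall_notMem_loopComp_self_foldr_iff {l : List α} (he : e ∉ l)
    (H : Finset (Finset α)) :
    (∀ X ∈ loopComp e (l.foldr loopComp H), e ∉ X) ↔ ∀ X ∈ loopComp e H, e ∉ X := by
  rw [forall_notMem_loopComp_self_iff, forall_notMem_loopComp_self_iff,
    preimage_erase_foldr_loopComp he, preimage_insert_foldr_loopComp he,
    (foldr_loopCompSet_injective l).eq_iff]

end Sections

theorem loop_loopComp_single_iff_all_general {α : Type*} [DecidableEq α] (E : Finset α)
    (F : Finset (Finset α)) (e : α) (he : e ∈ E)
    (l : List α) (hnd : l.Nodup) (hl : l.toFinset = E) :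
    (∀ X ∈ loopComp e F, e ∉ X) ↔ (∀ X ∈ l.foldr loopComp F, e ∉ X) := by
  obtain ⟨l₁, l₂, rfl⟩ := List.append_of_mem (List.mem_toFinset.mp (hl ▸ he))
  obtain ⟨-, hnd₂, hdisj⟩ := List.nodup_append.mp hnd
  have he₁ : e ∉ l₁ := fun h => hdisj e h e List.mem_cons_self rfl
  have he₂ : e ∉ l₂ := (List.nodup_cons.mp hnd₂).1
  rw [List.foldr_append, List.foldr_cons, forall_notMem_foldr_loopComp_iff he₁,
    forall_notMem_loopComp_self_foldr_iff he₂]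

/-- `e` is a loop of `D + e` (lies in no member of the collection of `D + e`)
if and only if `e` is a loop of `D + E`, where `D + E` is obtained by applying
loop complementation successively at every element of `E` (here enumerated,
without repetition, by a list `l`). -/
theorem loop_loopComp_single_iff_all {α : Type*} [DecidableEq α] (E : Finset α)
    (F : Finset (Finset α)) (hD : IsDeltaMatroid E F) (e : α) (he : e ∈ E)
    (l : List α) (hnd : l.Nodup) (hl : l.toFinset = E) :
    (∀ X ∈ loopComp e F, e ∉ X) ↔ (∀ X ∈ l.foldr loopComp F, e ∉ X) :=
  loop_loopComp_single_iff_all_general E F e he l hnd hl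
end

section
/- Let M be a matroid on finite ground set E with rank function r, and let T denote the subset-expansion Tutte polynomial T_N(x, y) = Σ_{A ⊆ E(N)} (x − 1)^{r_N(E(N)) − r_N(A)} (y − 1)^{|A| − r_N(A)}. Then the convolution formula holds: T_M(x, y) = Σ_{A ⊆ E} T_{M|A}(0, y) · T_{M/A}(x, 0), where M|A is the restriction of M to A and M/A is the contraction of M by A. -/
/-- A matroid given by a rank function on subsets of a finite ground set. -/
structure FinMatroid (α : Type*) [DecidableEq α] where
  E : Finset α
  r : Finset α → ℕ
  rank_empty : r ∅ = 0
  rank_insert : ∀ A ⊆ E, ∀ e ∈ E, r (insert e A) = r A ∨ r (insert e A) = r A + 1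
  rank_local : ∀ A ⊆ E, ∀ e ∈ E, ∀ f ∈ E,
    r (insert e A) = r A → r (insert f A) = r A → r (insert f (insert e A)) = r A

/-- Subset-expansion Tutte polynomial of a ground set `E` with rank function `rk`,
evaluated at `(x, y)`. -/
def tutteSum {α : Type*} [DecidableEq α] (E : Finset α) (rk : Finset α → ℕ)
    (x y : ℤ) : ℤ :=
  ∑ A ∈ E.powerset, (x - 1) ^ (rk E - rk A) * (y - 1) ^ (A.card - rk A)

/-!
Expanding both factors, the right-hand side becomes a sum over chains `B ⊆ A ⊆ C ⊆ E` whose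
summand is, up to the sign `(-1) ^ |A|`, a function of `B` and `C` alone; the sign is computed by
parity from `r B ≤ r A ≤ r C ≤ r A + |C \ A|`. Summing over `A` first, the alternating sum over the
interval `[B, C]` of the Boolean lattice vanishes unless `B = C`, and the diagonal terms are exactly
the terms of the subset expansion of `T_M(x, y)`.
-/

open Finset

theorem Finset.injOn_union_left_powerset_sdiff {α : Type*} [DecidableEq α] (A E : Finset α) :
    Set.InjOn (A ∪ ·) ((E \ A).powerset : Set (Finset α)) := fun D hD D' hD' h => by
  rw [← union_sdiff_cancel_left (disjoint_sdiff.mono_right (mem_powerset.1 hD)),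
    ← union_sdiff_cancel_left (disjoint_sdiff.mono_right (mem_powerset.1 hD'))]
  exact congrArg (· \ A) h

theorem Finset.sum_Icc_neg_one_pow_card {α : Type*} [DecidableEq α] (B C : Finset α) :
    ∑ A ∈ Icc B C, (-1 : ℤ) ^ #A = if B = C then (-1) ^ #B else 0 := by
  by_cases hBC : B ⊆ C
  · rw [Icc_eq_image_powerset hBC, sum_image (injOn_union_left_powerset_sdiff B C)]
    rw [sum_congr rfl fun D hD => by
        rw [card_union_of_disjoint (disjoint_sdiff.mono_right (mem_powerset.1 hD)), pow_add],
      ← mul_sum, sum_powerset_neg_one_pow_card]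
    by_cases h : B = C
    · simp [h]
    · rw [if_neg fun hCB => h (hBC.antisymm (sdiff_eq_empty_iff_subset.1 hCB)), if_neg h,
        mul_zero]
  · rw [Icc_eq_empty fun h => hBC h, sum_empty, if_neg fun h => hBC h.le]

theorem Finset.sum_Iic_sum_Iic_sum_Icc_comm {ι M : Type*} [PartialOrder ι] [LocallyFiniteOrder ι]
    [LocallyFiniteOrderBot ι] [AddCommMonoid M] (u : ι) (f : ι → ι → ι → M) :
    ∑ a ∈ Iic u, ∑ b ∈ Iic a, ∑ c ∈ Icc a u, f a b c =
      ∑ b ∈ Iic u, ∑ c ∈ Icc b u, ∑ a ∈ Icc b c, f a b c := by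
  rw [sum_comm' (t' := Iic u) (s' := fun b => Icc b u)]
  · refine sum_congr rfl fun b _ => sum_comm' fun a c => ?_
    simp only [mem_Icc]
    exact ⟨fun ⟨⟨hba, _⟩, hac, hcu⟩ => ⟨⟨hba, hac⟩, hba.trans hac, hcu⟩,
      fun ⟨⟨hba, hac⟩, _, hcu⟩ => ⟨⟨hba, hac.trans hcu⟩, hac, hcu⟩⟩
  · intro a b
    simp only [mem_Iic, mem_Icc]
    exact ⟨fun ⟨hau, hba⟩ => ⟨⟨hba, hau⟩, hba.trans hau⟩, fun ⟨⟨hba, hau⟩, _⟩ => ⟨hau, hba⟩⟩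

theorem tutteSum_contract_eq_sum_Icc {α : Type*} [DecidableEq α] {E A : Finset α} (hA : A ⊆ E)
    (rk : Finset α → ℕ) (x y : ℤ) :
    tutteSum (E \ A) (fun B => rk (B ∪ A) - rk A) x y =
      ∑ C ∈ Icc A E,
        (x - 1) ^ ((rk E - rk A) - (rk C - rk A)) * (y - 1) ^ (#(C \ A) - (rk C - rk A)) := by
  rw [tutteSum, Icc_eq_image_powerset hA, sum_image (injOn_union_left_powerset_sdiff A E)]
  refine sum_congr rfl fun D hD => ?_
  rw [sdiff_union_of_subset hA, union_comm,
    union_sdiff_cancel_left (disjoint_sdiff.mono_right (mem_powerset.1 hD))]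

namespace FinMatroid

variable {α : Type*} [DecidableEq α] (M : FinMatroid α)

theorem rank_le_rank_union_le {A D : Finset α} (hA : A ⊆ M.E) (hD : D ⊆ M.E) :
    M.r A ≤ M.r (D ∪ A) ∧ M.r (D ∪ A) ≤ M.r A + #D := by
  induction D using Finset.induction_on with
  | empty => simp
  | insert e D he ih =>
    have hDE : D ⊆ M.E := (subset_insert e D).trans hD
    have hstep := M.rank_insert (D ∪ A) (union_subset hDE hA) e (hD (mem_insert_self e D))
    rw [insert_union, card_insert_of_notMem he]
    have := ih hDE
    omega

theorem rank_mono {A B : Finset α} (hAB : A ⊆ B) (hB : B ⊆ M.E) : M.r A ≤ M.r B := by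
  simpa [sdiff_union_of_subset hAB] using
    (M.rank_le_rank_union_le (hAB.trans hB) (sdiff_subset.trans hB) (D := B \ A)).1

theorem rank_le_add_card_sdiff {A B : Finset α} (hAB : A ⊆ B) (hB : B ⊆ M.E) :
    M.r B ≤ M.r A + #(B \ A) := by
  simpa [sdiff_union_of_subset hAB] using
    (M.rank_le_rank_union_le (hAB.trans hB) (sdiff_subset.trans hB) (D := B \ A)).2

/-- The rank inequalities make the truncated subtractions exact, so the exponents can be compared
modulo `2`. -/
theorem neg_one_pow_corank_mul_neg_one_pow_nullity {A B C : Finset α} (hBA : B ⊆ A)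
    (hAC : A ⊆ C) (hC : C ⊆ M.E) :
    (-1 : ℤ) ^ (M.r A - M.r B) * (-1) ^ (#(C \ A) - (M.r C - M.r A)) =
      (-1) ^ #A * (-1) ^ (M.r B + M.r C + #C) := by
  have := M.rank_mono hBA (hAC.trans hC)
  have := M.rank_mono hAC hC
  have := M.rank_le_add_card_sdiff hAC hC
  have := card_sdiff_of_subset hAC
  have := card_le_card hAC
  rw [← pow_add, ← pow_add, neg_one_pow_eq_pow_mod_two, neg_one_pow_eq_pow_mod_two (n := #A + _)]
  congr 1
  omega

end FinMatroid

/-- The convolution formula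
`T_M(x, y) = Σ_{A ⊆ E} T_{M|A}(0, y) ⬝ T_{M/A}(x, 0)`, where the restriction
`M|A` has ground set `A` and rank function `r`, and the contraction `M/A` has
ground set `E \ A` and rank function `B ↦ r(B ∪ A) − r(A)`. -/
theorem tutte_convolution {α : Type*} [DecidableEq α] (M : FinMatroid α) (x y : ℤ) :
    tutteSum M.E M.r x y =
      ∑ A ∈ M.E.powerset,
        tutteSum A M.r 0 y *
          tutteSum (M.E \ A) (fun B => M.r (B ∪ A) - M.r A) x 0 := by
  set g : Finset α → Finset α → ℤ := fun B C =>
    (-1) ^ (M.r B + M.r C + #C) * ((y - 1) ^ (#B - M.r B) * (x - 1) ^ (M.r M.E - M.r C))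
  have expand : ∀ A ∈ M.E.powerset,
      tutteSum A M.r 0 y * tutteSum (M.E \ A) (fun B => M.r (B ∪ A) - M.r A) x 0 =
        ∑ B ∈ Iic A, ∑ C ∈ Icc A M.E, (-1) ^ #A * g B C := by
    intro A hA
    rw [tutteSum, tutteSum_contract_eq_sum_Icc (mem_powerset.1 hA), sum_mul_sum, Iic_eq_powerset]
    refine sum_congr rfl fun B hB => sum_congr rfl fun C hC => ?_
    obtain ⟨hAC, hCE⟩ := mem_Icc.1 hC
    have hrank : M.r M.E - M.r A - (M.r C - M.r A) = M.r M.E - M.r C := by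
      have := M.rank_mono hAC hCE
      have := M.rank_mono hCE le_rfl
      omega
    have hsign := M.neg_one_pow_corank_mul_neg_one_pow_nullity (mem_powerset.1 hB) hAC hCE
    rw [hrank, zero_sub]
    linear_combination ((y - 1) ^ (#B - M.r B) * (x - 1) ^ (M.r M.E - M.r C)) * hsign
  calc tutteSum M.E M.r x y
      = ∑ B ∈ Iic M.E, (-1) ^ #B * g B B := by
        rw [tutteSum, Iic_eq_powerset]
        refine sum_congr rfl fun B _ => ?_
        rw [← mul_assoc, ← pow_add, Even.neg_one_pow ⟨M.r B + #B, by ring⟩, one_mul, mul_comm]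
    _ = ∑ B ∈ Iic M.E, ∑ C ∈ Icc B M.E, ∑ A ∈ Icc B C, (-1) ^ #A * g B C := by
        refine sum_congr rfl fun B hB => ?_
        simp only [← sum_mul, sum_Icc_neg_one_pow_card, ite_mul, zero_mul, sum_ite_eq,
          if_pos (mem_Icc.2 ⟨le_rfl, mem_Iic.1 hB⟩)]
    _ = ∑ A ∈ Iic M.E, ∑ B ∈ Iic A, ∑ C ∈ Icc A M.E, (-1) ^ #A * g B C :=
        (sum_Iic_sum_Iic_sum_Icc_comm _ _).symm
    _ = _ := by rw [Iic_eq_powerset]; exact sum_congr rfl fun A hA => (expand A hA).symm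
end
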